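/- arXiv:1508.01756 — 4 statements merged into one kernel-verified Lean document; each statement's English description precedes it below -/
import Mathlib

section
/- Let F : ℝ → ℝ be globally Lipschitz, let a, b > 0, and let f : [0,a] → ℝ and g : [0,b] → ℝ be continuous with f(0) = g(0) = c. Then there exists a continuous function Y : [0,a] × [0,b] → ℝ satisfying the integral equation Y(x,t) = f(x) + g(t) - c + ∫₀ˣ ∫₀ᵗ F(Y(u,v)) dv du for all (x,t) ∈ [0,a] × [0,b]. -/
/-!
The solution is a fixed point of the Picard operator `Y ↦ f + g - c + ∬ F ∘ Y` on continuous
functions on the rectangle. For `K`-Lipschitz `F` this operator need not be a contraction, but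
its iterates eventually are: by induction, the `n`-th iterates of two functions differ at
`(x, t)` by at most `(K a t)ⁿ / n!` times their distance, each step integrating the previous
bound in `t`. As `(K a b)ⁿ / n! → 0`, some iterate is a contraction, and its fixed point is
fixed by the operator itself.
-/

open MeasureTheory Set Function
open scoped Interval

section FixedPoint

variable {α : Type*} [MetricSpace α] [CompleteSpace α] [Nonempty α]

theorem exists_isFixedPt_of_dist_iterate_le {T : α → α} {C : ℝ}
    (hT : ∀ n x y, dist (T^[n] x) (T^[n] y) ≤ C ^ n / n.factorial * dist x y) :
    ∃ x, IsFixedPt T x := by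
  obtain ⟨n, hn⟩ := (FloorSemiring.tendsto_pow_div_factorial_atTop C).eventually
    (gt_mem_nhds zero_lt_one) |>.exists
  have hcontr : ContractingWith (C ^ n / n.factorial).toNNReal T^[n] :=
    ⟨Real.toNNReal_lt_one.2 hn, LipschitzWith.of_dist_le' (hT n)⟩
  exact ⟨_, hcontr.isFixedPt_fixedPoint_iterate⟩

end FixedPoint

noncomputable section

variable {E : Type*} [NormedAddCommGroup E] [NormedSpace ℝ E]

def doublePrimitive (G : ℝ × ℝ → E) (p : ℝ × ℝ) : E :=
  ∫ u in (0 : ℝ)..p.1, ∫ v in (0 : ℝ)..p.2, G (u, v)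

theorem continuous_doublePrimitive {G : ℝ × ℝ → E} (hG : Continuous G) :
    Continuous (doublePrimitive G) := by
  have hinner : Continuous fun q : (ℝ × ℝ) × ℝ => ∫ v in (0 : ℝ)..q.1.2, G (q.2, v) :=
    intervalIntegral.continuous_parametric_intervalIntegral_of_continuous (μ := volume)
      (f := fun (q : (ℝ × ℝ) × ℝ) v => G (q.2, v)) (by fun_prop) (by fun_prop)
  exact intervalIntegral.continuous_parametric_intervalIntegral_of_continuous (μ := volume)
    (f := fun p u => ∫ v in (0 : ℝ)..p.2, G (u, v)) hinner continuous_fst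

theorem doublePrimitive_sub {G₁ G₂ : ℝ × ℝ → E} (hG₁ : Continuous G₁) (hG₂ : Continuous G₂) :
    doublePrimitive (G₁ - G₂) = doublePrimitive G₁ - doublePrimitive G₂ := by
  have hint : ∀ G : ℝ × ℝ → E, Continuous G → ∀ t x,
      IntervalIntegrable (fun u => ∫ v in (0 : ℝ)..t, G (u, v)) volume 0 x := fun G hG t _ =>
    (intervalIntegral.continuous_parametric_intervalIntegral_of_continuous'
      (f := fun u v => G (u, v)) (by fun_prop) 0 t).intervalIntegrable _ _
  ext ⟨x, t⟩
  simp only [doublePrimitive, Pi.sub_apply]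
  rw [← intervalIntegral.integral_sub (hint G₁ hG₁ t x) (hint G₂ hG₂ t x)]
  refine intervalIntegral.integral_congr fun u _ => ?_
  exact intervalIntegral.integral_sub
    ((by fun_prop : Continuous fun v => G₁ (u, v)).intervalIntegrable _ _)
    ((by fun_prop : Continuous fun v => G₂ (u, v)).intervalIntegrable _ _)

theorem norm_doublePrimitive_le {G : ℝ × ℝ → E} {x t M : ℝ} {n : ℕ} (hx : 0 ≤ x) (ht : 0 ≤ t)
    (hG : ∀ u ∈ Icc 0 x, ∀ v ∈ Icc 0 t, ‖G (u, v)‖ ≤ M * v ^ n) :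
    ‖doublePrimitive G (x, t)‖ ≤ M * (t ^ (n + 1) / (n + 1)) * x := by
  have hinner : ∀ u ∈ Ι 0 x, ‖∫ v in (0 : ℝ)..t, G (u, v)‖ ≤ M * (t ^ (n + 1) / (n + 1)) := by
    intro u hu
    rw [uIoc_of_le hx] at hu
    calc ‖∫ v in (0 : ℝ)..t, G (u, v)‖ ≤ ∫ v in (0 : ℝ)..t, M * v ^ n :=
          intervalIntegral.norm_integral_le_of_norm_le ht
            (Filter.Eventually.of_forall fun v hv =>
              hG u (Ioc_subset_Icc_self hu) v (Ioc_subset_Icc_self hv))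
            ((continuous_const.mul (continuous_pow n)).intervalIntegrable _ _)
      _ = M * (t ^ (n + 1) / (n + 1)) := by simp
  simpa [doublePrimitive, abs_of_nonneg hx] using
    intervalIntegral.norm_integral_le_of_norm_le_const hinner

section Goursat

variable {a b : ℝ} (ha : 0 ≤ a) (hb : 0 ≤ b)

section Extend

variable {X : Type*} [TopologicalSpace X]

/-- Continuous extension to the plane through the nearest-point projection onto the rectangle,
so that the integrand of the Goursat equation is defined everywhere. -/
def extendRect (Y : C(Icc 0 a × Icc 0 b, X)) : C(ℝ × ℝ, X) :=
  Y.comp ⟨Prod.map (projIcc 0 a ha) (projIcc 0 b hb),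
    continuous_projIcc.prodMap continuous_projIcc⟩

theorem extendRect_apply (Y : C(Icc 0 a × Icc 0 b, X)) {x t : ℝ} (hx : x ∈ Icc 0 a)
    (ht : t ∈ Icc 0 b) : extendRect ha hb Y (x, t) = Y (⟨x, hx⟩, ⟨t, ht⟩) := by
  simp [extendRect, projIcc_of_mem _ hx, projIcc_of_mem _ ht]

end Extend

variable {F : E → E} (φ : C(Icc 0 a × Icc 0 b, E))

def goursatMap (hF : Continuous F) (Y : C(Icc 0 a × Icc 0 b, E)) : C(Icc 0 a × Icc 0 b, E) :=
  φ + (⟨doublePrimitive (F ∘ extendRect ha hb Y),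
    continuous_doublePrimitive (hF.comp (extendRect ha hb Y).continuous)⟩ : C(ℝ × ℝ, E)).comp
      ⟨fun q => ((q.1 : ℝ), (q.2 : ℝ)), by fun_prop⟩

theorem goursatMap_apply (hF : Continuous F) (Y : C(Icc 0 a × Icc 0 b, E))
    (q : Icc 0 a × Icc 0 b) :
    goursatMap ha hb φ hF Y q = φ q + doublePrimitive (F ∘ extendRect ha hb Y) (q.1, q.2) :=
  rfl

variable {K : NNReal} (hF : LipschitzWith K F)
include hF

theorem norm_goursatMap_iterate_sub_le (n : ℕ) (Y₁ Y₂ : C(Icc 0 a × Icc 0 b, E))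
    (q : Icc 0 a × Icc 0 b) :
    ‖(goursatMap ha hb φ hF.continuous)^[n] Y₁ q - (goursatMap ha hb φ hF.continuous)^[n] Y₂ q‖
      ≤ (K * a * q.2) ^ n / n.factorial * dist Y₁ Y₂ := by
  induction n generalizing q with
  | zero => simpa [dist_eq_norm] using ContinuousMap.dist_apply_le_dist (f := Y₁) (g := Y₂) q
  | succ n ih =>
    obtain ⟨⟨x, hx⟩, ⟨t, ht⟩⟩ := q
    simp only [iterate_succ_apply', goursatMap_apply, add_sub_add_left_eq_sub]
    set Z₁ := extendRect ha hb ((goursatMap ha hb φ hF.continuous)^[n] Y₁)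
    set Z₂ := extendRect ha hb ((goursatMap ha hb φ hF.continuous)^[n] Y₂)
    rw [← Pi.sub_apply, ← doublePrimitive_sub (hF.continuous.comp Z₁.continuous)
      (hF.continuous.comp Z₂.continuous)]
    have hL : 0 ≤ (K * a) ^ n / n.factorial * dist Y₁ Y₂ := by positivity
    set L := (K * a) ^ n / n.factorial * dist Y₁ Y₂ with hL_def
    have hstep : ∀ u ∈ Icc 0 x, ∀ v ∈ Icc 0 t, ‖(F ∘ Z₁ - F ∘ Z₂) (u, v)‖ ≤ K * L * v ^ n := by
      intro u hu v hv
      have hua : u ∈ Icc 0 a := ⟨hu.1, hu.2.trans hx.2⟩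
      have hvb : v ∈ Icc 0 b := ⟨hv.1, hv.2.trans ht.2⟩
      calc ‖(F ∘ Z₁ - F ∘ Z₂) (u, v)‖ ≤ K * ‖Z₁ (u, v) - Z₂ (u, v)‖ := hF.norm_sub_le _ _
        _ ≤ K * ((K * a * v) ^ n / n.factorial * dist Y₁ Y₂) := by
          rw [extendRect_apply ha hb _ hua hvb, extendRect_apply ha hb _ hua hvb]
          exact mul_le_mul_of_nonneg_left (ih (⟨u, hua⟩, ⟨v, hvb⟩)) K.coe_nonneg
        _ = K * L * v ^ n := by ring
    calc _ ≤ K * L * (t ^ (n + 1) / (n + 1)) * x := norm_doublePrimitive_le hx.1 ht.1 hstep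
      _ ≤ K * L * (t ^ (n + 1) / (n + 1)) * a :=
        mul_le_mul_of_nonneg_left hx.2 (by have := ht.1; positivity)
      _ = (K * a * t) ^ (n + 1) / (n + 1).factorial * dist Y₁ Y₂ := by
        rw [hL_def, Nat.factorial_succ]; push_cast; field_simp; ring

theorem dist_goursatMap_iterate_le (n : ℕ) (Y₁ Y₂ : C(Icc 0 a × Icc 0 b, E)) :
    dist ((goursatMap ha hb φ hF.continuous)^[n] Y₁) ((goursatMap ha hb φ hF.continuous)^[n] Y₂)
      ≤ (K * a * b) ^ n / n.factorial * dist Y₁ Y₂ := by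
  refine (ContinuousMap.dist_le (by positivity)).2 fun q => ?_
  rw [dist_eq_norm]
  refine (norm_goursatMap_iterate_sub_le ha hb φ hF n Y₁ Y₂ q).trans ?_
  have hq := q.2.2
  gcongr
  · exact mul_nonneg (by positivity) hq.1
  · exact hq.2

theorem exists_isFixedPt_goursatMap [CompleteSpace E] :
    ∃ Y, IsFixedPt (goursatMap ha hb φ hF.continuous) Y :=
  exists_isFixedPt_of_dist_iterate_le (dist_goursatMap_iterate_le ha hb φ hF)

end Goursat

end

theorem goursat_integral_existence_general (F : ℝ → ℝ) (hF : ∃ K : NNReal, LipschitzWith K F)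
    (a b : ℝ) (ha : 0 < a) (hb : 0 < b) (f g : ℝ → ℝ) (c : ℝ)
    (hf : ContinuousOn f (Set.Icc 0 a)) (hg : ContinuousOn g (Set.Icc 0 b)) :
    ∃ Y : ℝ → ℝ → ℝ,
      ContinuousOn (fun p : ℝ × ℝ => Y p.1 p.2) (Set.Icc 0 a ×ˢ Set.Icc 0 b) ∧
      ∀ x ∈ Set.Icc (0 : ℝ) a, ∀ t ∈ Set.Icc (0 : ℝ) b,
        Y x t = f x + g t - c
          + ∫ u in (0 : ℝ)..x, ∫ v in (0 : ℝ)..t, F (Y u v) := by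
  obtain ⟨K, hK⟩ := hF
  let φ : C(Icc 0 a × Icc 0 b, ℝ) := ⟨fun q => f q.1 + g q.2 - c,
    ((hf.domRestrict.comp continuous_fst).add (hg.domRestrict.comp continuous_snd)).sub
      continuous_const⟩
  obtain ⟨Y, hY⟩ := exists_isFixedPt_goursatMap ha.le hb.le φ hK
  refine ⟨fun x t => extendRect ha.le hb.le Y (x, t),
    (extendRect ha.le hb.le Y).continuous.continuousOn, fun x hx t ht => ?_⟩
  exact (extendRect_apply ha.le hb.le Y hx ht).trans (DFunLike.congr_fun hY.symm _)

/-- Existence for the Goursat integral equation on a rectangle: for globally Lipschitz `F`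
and continuous data `f`, `g` with `f(0) = g(0) = c`, there is a continuous solution of
`Y(x,t) = f(x) + g(t) - c + ∫₀ˣ∫₀ᵗ F(Y(u,v)) dv du` on `[0,a] × [0,b]`. -/
theorem goursat_integral_existence (F : ℝ → ℝ) (hF : ∃ K : NNReal, LipschitzWith K F)
    (a b : ℝ) (ha : 0 < a) (hb : 0 < b) (f g : ℝ → ℝ) (c : ℝ)
    (hf : ContinuousOn f (Set.Icc 0 a)) (hg : ContinuousOn g (Set.Icc 0 b))
    (hf0 : f 0 = c) (hg0 : g 0 = c) :
    ∃ Y : ℝ → ℝ → ℝ,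
      ContinuousOn (fun p : ℝ × ℝ => Y p.1 p.2) (Set.Icc 0 a ×ˢ Set.Icc 0 b) ∧
      ∀ x ∈ Set.Icc (0 : ℝ) a, ∀ t ∈ Set.Icc (0 : ℝ) b,
        Y x t = f x + g t - c
          + ∫ u in (0 : ℝ)..x, ∫ v in (0 : ℝ)..t, F (Y u v) :=
  goursat_integral_existence_general F hF a b ha hb f g c hf hg
end

section
/- Let F : ℝ → ℝ be globally Lipschitz, let a, b > 0, and let f : [0,a] → ℝ and g : [0,b] → ℝ be continuous with f(0) = g(0) = c. If Y₁ and Y₂ are continuous functions on [0,a] × [0,b] both satisfying the integral equation Y(x,t) = f(x) + g(t) - c + ∫₀ˣ ∫₀ᵗ F(Y(u,v)) dv du for all (x,t) ∈ [0,a] × [0,b], then Y₁ = Y₂ on [0,a] × [0,b]. -/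
/-!
The difference `D = Y₁ - Y₂` satisfies `D(x,t) = ∫₀ˣ∫₀ᵗ (F(Y₁) - F(Y₂))`, whose integrand is
bounded by `K |D|`. Starting from a bound `M` of `|D|` on the compact rectangle and feeding it back
into this identity gives, by induction, `|D(x,t)| ≤ M (K b x)ⁿ / n!` for every `n`, and the
right-hand side tends to `0`.
-/

open intervalIntegral MeasureTheory Set Filter Nat

theorem ContinuousOn.exists_continuous_eqOn {X : Type*} [TopologicalSpace X] [NormalSpace X]
    {s : Set X} {f : X → ℝ} (hs : IsClosed s) (hf : ContinuousOn f s) :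
    ∃ g : X → ℝ, Continuous g ∧ EqOn g f s := by
  obtain ⟨g, hg⟩ := ContinuousMap.exists_restrict_eq hs ⟨s.domRestrict f, hf.domRestrict⟩
  exact ⟨g, g.continuous, fun x hx => congr($hg ⟨x, hx⟩)⟩

section IteratedIntegral

variable {G G₁ G₂ : ℝ → ℝ → ℝ} {x t : ℝ}

theorem intervalIntegrable_integral_of_continuousOn (hx : 0 ≤ x) (ht : 0 ≤ t)
    (hG : ContinuousOn (fun p : ℝ × ℝ => G p.1 p.2) (Icc 0 x ×ˢ Icc 0 t)) :
    IntervalIntegrable (fun u => ∫ v in (0 : ℝ)..t, G u v) volume 0 x := by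
  -- Mathlib's continuity of parametric integrals needs `G` continuous on the whole plane.
  obtain ⟨G', hG'c, hG'⟩ := hG.exists_continuous_eqOn (isClosed_Icc.prod isClosed_Icc)
  have hcont : Continuous fun u => ∫ v in (0 : ℝ)..t, G' (u, v) :=
    continuous_parametric_intervalIntegral_of_continuous' (f := fun u v => G' (u, v)) hG'c 0 t
  refine (hcont.continuousOn.congr fun u hu => ?_).intervalIntegrable
  rw [uIcc_of_le hx] at hu
  refine integral_congr fun v hv => ?_
  rw [uIcc_of_le ht] at hv
  exact (hG' (mk_mem_prod hu hv)).symm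

theorem integral_integral_sub (hx : 0 ≤ x) (ht : 0 ≤ t)
    (hG₁ : ContinuousOn (fun p : ℝ × ℝ => G₁ p.1 p.2) (Icc 0 x ×ˢ Icc 0 t))
    (hG₂ : ContinuousOn (fun p : ℝ × ℝ => G₂ p.1 p.2) (Icc 0 x ×ˢ Icc 0 t)) :
    (∫ u in (0 : ℝ)..x, ∫ v in (0 : ℝ)..t, G₁ u v) - ∫ u in (0 : ℝ)..x, ∫ v in (0 : ℝ)..t, G₂ u v
      = ∫ u in (0 : ℝ)..x, ∫ v in (0 : ℝ)..t, (G₁ u v - G₂ u v) := by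
  rw [← integral_sub (intervalIntegrable_integral_of_continuousOn hx ht hG₁)
    (intervalIntegrable_integral_of_continuousOn hx ht hG₂)]
  refine integral_congr fun u hu => ?_
  rw [uIcc_of_le hx] at hu
  have hslice {G : ℝ → ℝ → ℝ}
      (hG : ContinuousOn (fun p : ℝ × ℝ => G p.1 p.2) (Icc 0 x ×ˢ Icc 0 t)) :
      IntervalIntegrable (G u) volume 0 t := by
    refine ContinuousOn.intervalIntegrable ?_
    rw [uIcc_of_le ht]
    exact hG.comp (Continuous.prodMk_right u).continuousOn fun v hv => ⟨hu, hv⟩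
  exact (integral_sub (hslice hG₁) (hslice hG₂)).symm

theorem abs_integral_integral_le_of_abs_le_mul_pow {C : ℝ} {n : ℕ} (hx : 0 ≤ x) (ht : 0 ≤ t)
    (hG : ∀ u ∈ Icc 0 x, ∀ v ∈ Icc 0 t, |G u v| ≤ C * u ^ n) :
    |∫ u in (0 : ℝ)..x, ∫ v in (0 : ℝ)..t, G u v| ≤ C * t * (x ^ (n + 1) / (n + 1)) := by
  have hinner : ∀ u ∈ Ioc 0 x, |∫ v in (0 : ℝ)..t, G u v| ≤ C * t * u ^ n := fun u hu =>
    calc |∫ v in (0 : ℝ)..t, G u v| ≤ ∫ _ in (0 : ℝ)..t, C * u ^ n :=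
          norm_integral_le_of_norm_le (f := G u) ht (ae_of_all _ fun v hv =>
            hG u (Ioc_subset_Icc_self hu) v (Ioc_subset_Icc_self hv)) intervalIntegrable_const
      _ = C * t * u ^ n := by
          simp only [intervalIntegral.integral_const, sub_zero, smul_eq_mul]; ring
  have hbound : Continuous fun u : ℝ => C * t * u ^ n := by fun_prop
  calc |∫ u in (0 : ℝ)..x, ∫ v in (0 : ℝ)..t, G u v| ≤ ∫ u in (0 : ℝ)..x, C * t * u ^ n :=
        norm_integral_le_of_norm_le (f := fun u => ∫ v in (0 : ℝ)..t, G u v) hx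
          (ae_of_all _ hinner) (hbound.intervalIntegrable 0 x)
    _ = C * t * (x ^ (n + 1) / (n + 1)) := by
        rw [intervalIntegral.integral_const_mul, integral_pow]; ring

end IteratedIntegral

section Gronwall

variable {D H : ℝ → ℝ → ℝ} {a b K M : ℝ}

theorem abs_le_mul_pow_div_factorial_of_eq_integral_integral (hK : 0 ≤ K)
    (hM : ∀ x ∈ Icc 0 a, ∀ t ∈ Icc 0 b, |D x t| ≤ M)
    (hHD : ∀ x ∈ Icc 0 a, ∀ t ∈ Icc 0 b, |H x t| ≤ K * |D x t|)
    (hDH : ∀ x ∈ Icc 0 a, ∀ t ∈ Icc 0 b, D x t = ∫ u in (0 : ℝ)..x, ∫ v in (0 : ℝ)..t, H u v)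
    (n : ℕ) : ∀ x ∈ Icc 0 a, ∀ t ∈ Icc 0 b, |D x t| ≤ M * (K * b * x) ^ n / n ! := by
  induction n with
  | zero => simpa using hM
  | succ n ih =>
    intro x hx t ht
    have hM0 : 0 ≤ M := (abs_nonneg _).trans (hM x hx t ht)
    set C := K * (M * (K * b) ^ n / n !)
    have hH : ∀ u ∈ Icc 0 x, ∀ v ∈ Icc 0 t, |H u v| ≤ C * u ^ n := by
      intro u hu v hv
      have hu' : u ∈ Icc 0 a := ⟨hu.1, hu.2.trans hx.2⟩
      calc |H u v| ≤ K * |D u v| := hHD u hu' v ⟨hv.1, hv.2.trans ht.2⟩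
        _ ≤ K * (M * (K * b * u) ^ n / n !) := by
            gcongr; exact ih u hu' v ⟨hv.1, hv.2.trans ht.2⟩
        _ = C * u ^ n := by simp only [C, mul_pow]; ring
    calc |D x t| ≤ C * t * (x ^ (n + 1) / (n + 1)) := by
          rw [hDH x hx t ht]; exact abs_integral_integral_le_of_abs_le_mul_pow hx.1 ht.1 hH
      _ ≤ C * b * (x ^ (n + 1) / (n + 1)) := by
          have hC : 0 ≤ C := mul_nonneg hK (by have := ht.1.trans ht.2; positivity)
          have hx' : 0 ≤ x ^ (n + 1) / (n + 1) := by have := hx.1; positivity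
          exact mul_le_mul_of_nonneg_right (mul_le_mul_of_nonneg_left ht.2 hC) hx'
      _ = M * (K * b * x) ^ (n + 1) / (n + 1)! := by
          simp only [C, factorial_succ]; push_cast; field_simp; ring

theorem eq_zero_of_eq_integral_integral_of_abs_le_mul (hK : 0 ≤ K)
    (hM : ∀ x ∈ Icc 0 a, ∀ t ∈ Icc 0 b, |D x t| ≤ M)
    (hHD : ∀ x ∈ Icc 0 a, ∀ t ∈ Icc 0 b, |H x t| ≤ K * |D x t|)
    (hDH : ∀ x ∈ Icc 0 a, ∀ t ∈ Icc 0 b, D x t = ∫ u in (0 : ℝ)..x, ∫ v in (0 : ℝ)..t, H u v) :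
    ∀ x ∈ Icc 0 a, ∀ t ∈ Icc 0 b, D x t = 0 := by
  intro x hx t ht
  have hlim : Tendsto (fun n : ℕ => M * (K * b * x) ^ n / n !) atTop (nhds 0) := by
    simpa [mul_div_assoc] using
      (FloorSemiring.tendsto_pow_div_factorial_atTop (K * b * x)).const_mul M
  exact abs_nonpos_iff.mp <| ge_of_tendsto' hlim fun n =>
    abs_le_mul_pow_div_factorial_of_eq_integral_integral hK hM hHD hDH n x hx t ht

end Gronwall

theorem goursat_integral_uniqueness_general (F : ℝ → ℝ) (hF : ∃ K : NNReal, LipschitzWith K F)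
    (a b : ℝ) (f g : ℝ → ℝ) (c : ℝ) (Y₁ Y₂ : ℝ → ℝ → ℝ)
    (hY₁ : ContinuousOn (fun p : ℝ × ℝ => Y₁ p.1 p.2) (Set.Icc 0 a ×ˢ Set.Icc 0 b))
    (hY₂ : ContinuousOn (fun p : ℝ × ℝ => Y₂ p.1 p.2) (Set.Icc 0 a ×ˢ Set.Icc 0 b))
    (heq₁ : ∀ x ∈ Set.Icc (0 : ℝ) a, ∀ t ∈ Set.Icc (0 : ℝ) b,
      Y₁ x t = f x + g t - c + ∫ u in (0 : ℝ)..x, ∫ v in (0 : ℝ)..t, F (Y₁ u v))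
    (heq₂ : ∀ x ∈ Set.Icc (0 : ℝ) a, ∀ t ∈ Set.Icc (0 : ℝ) b,
      Y₂ x t = f x + g t - c + ∫ u in (0 : ℝ)..x, ∫ v in (0 : ℝ)..t, F (Y₂ u v)) :
    ∀ x ∈ Set.Icc (0 : ℝ) a, ∀ t ∈ Set.Icc (0 : ℝ) b, Y₁ x t = Y₂ x t := by
  obtain ⟨K, hK⟩ := hF
  obtain ⟨M, hM⟩ :=
    (isCompact_Icc.prod isCompact_Icc).exists_bound_of_continuousOn (hY₁.sub hY₂)
  have hFY {Y : ℝ → ℝ → ℝ}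
      (hY : ContinuousOn (fun p : ℝ × ℝ => Y p.1 p.2) (Icc 0 a ×ˢ Icc 0 b))
      {x t : ℝ} (hx : x ≤ a) (ht : t ≤ b) :
      ContinuousOn (fun p : ℝ × ℝ => F (Y p.1 p.2)) (Icc 0 x ×ˢ Icc 0 t) :=
    hK.continuous.comp_continuousOn <|
      hY.mono (prod_mono (Icc_subset_Icc_right hx) (Icc_subset_Icc_right ht))
  have hdiff : ∀ x ∈ Icc 0 a, ∀ t ∈ Icc 0 b, Y₁ x t - Y₂ x t =
      ∫ u in (0 : ℝ)..x, ∫ v in (0 : ℝ)..t, (F (Y₁ u v) - F (Y₂ u v)) := by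
    intro x hx t ht
    rw [heq₁ x hx t ht, heq₂ x hx t ht,
      ← integral_integral_sub hx.1 ht.1 (hFY hY₁ hx.2 ht.2) (hFY hY₂ hx.2 ht.2)]
    ring
  have hlip : ∀ x t, |F (Y₁ x t) - F (Y₂ x t)| ≤ K * |Y₁ x t - Y₂ x t| := fun x t => by
    simpa only [Real.dist_eq] using hK.dist_le_mul (Y₁ x t) (Y₂ x t)
  intro x hx t ht
  exact sub_eq_zero.mp <| eq_zero_of_eq_integral_integral_of_abs_le_mul
    (D := fun x t => Y₁ x t - Y₂ x t) K.coe_nonneg (fun x hx t ht => hM (x, t) ⟨hx, ht⟩)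
    (fun x _ t _ => hlip x t) hdiff x hx t ht

/-- Uniqueness for the Goursat integral equation on a rectangle: for globally Lipschitz `F`
and continuous data `f`, `g` with `f(0) = g(0) = c`, any two continuous solutions of
`Y(x,t) = f(x) + g(t) - c + ∫₀ˣ∫₀ᵗ F(Y(u,v)) dv du` on `[0,a] × [0,b]` coincide there. -/
theorem goursat_integral_uniqueness (F : ℝ → ℝ) (hF : ∃ K : NNReal, LipschitzWith K F)
    (a b : ℝ) (ha : 0 < a) (hb : 0 < b) (f g : ℝ → ℝ) (c : ℝ)
    (hf : ContinuousOn f (Set.Icc 0 a)) (hg : ContinuousOn g (Set.Icc 0 b))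
    (hf0 : f 0 = c) (hg0 : g 0 = c) (Y₁ Y₂ : ℝ → ℝ → ℝ)
    (hY₁ : ContinuousOn (fun p : ℝ × ℝ => Y₁ p.1 p.2) (Set.Icc 0 a ×ˢ Set.Icc 0 b))
    (hY₂ : ContinuousOn (fun p : ℝ × ℝ => Y₂ p.1 p.2) (Set.Icc 0 a ×ˢ Set.Icc 0 b))
    (heq₁ : ∀ x ∈ Set.Icc (0 : ℝ) a, ∀ t ∈ Set.Icc (0 : ℝ) b,
      Y₁ x t = f x + g t - c + ∫ u in (0 : ℝ)..x, ∫ v in (0 : ℝ)..t, F (Y₁ u v))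
    (heq₂ : ∀ x ∈ Set.Icc (0 : ℝ) a, ∀ t ∈ Set.Icc (0 : ℝ) b,
      Y₂ x t = f x + g t - c + ∫ u in (0 : ℝ)..x, ∫ v in (0 : ℝ)..t, F (Y₂ u v)) :
    ∀ x ∈ Set.Icc (0 : ℝ) a, ∀ t ∈ Set.Icc (0 : ℝ) b, Y₁ x t = Y₂ x t :=
  goursat_integral_uniqueness_general F hF a b f g c Y₁ Y₂ hY₁ hY₂ heq₁ heq₂
end

section
/- Let f, g : [0,∞) → ℝ be continuous with f(0) = g(0) = c. Then there exists exactly one continuous function Y : [0,∞) × [0,∞) → ℝ satisfying Y(x,t) = f(x) + g(t) - c + ∫₀ˣ ∫₀ᵗ sin(Y(u,v)) dv du for all x, t ≥ 0. -/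
/-!
Write a solution of `Y = h + ∫₀ˣ∫₀ᵗ σ(Y)` as `Y = h + e^{2(x+t)} φ`. Since
`∫₀ˣ∫₀ᵗ e^{2(u+v)} dv du ≤ e^{2(x+t)} / 4`, the equation becomes a fixed-point equation
`φ = T φ` for an operator `T` that is a `1/4`-contraction of the bounded continuous functions on
the quadrant when `σ` is `1`-Lipschitz; when `σ` is bounded, every continuous solution comes from
a bounded `φ`. Banach's fixed point theorem then gives existence and uniqueness, here for
`σ = sin` and `h(x, t) = f(x) + g(t) - c`.
-/

open Set Function intervalIntegral Real
open scoped BoundedContinuousFunction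

theorem continuous_projIci {α : Type*} [LinearOrder α] [TopologicalSpace α] [OrderTopology α]
    {a : α} : Continuous (projIci a) :=
  Continuous.subtype_mk (by fun_prop) _

namespace Goursat

noncomputable def doubleIntegral (F : ℝ → ℝ → ℝ) (x t : ℝ) : ℝ :=
  ∫ u in (0 : ℝ)..x, ∫ v in (0 : ℝ)..t, F u v

section DoubleIntegral

variable {F G : ℝ → ℝ → ℝ} {x t : ℝ}

theorem continuous_integral_comp (hF : Continuous (uncurry F)) {X : Type*} [TopologicalSpace X]
    {a s : X → ℝ} (ha : Continuous a) (hs : Continuous s) :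
    Continuous fun y => ∫ v in (0 : ℝ)..s y, F (a y) v :=
  continuous_parametric_intervalIntegral_of_continuous (f := fun y v => F (a y) v)
    (hF.comp (ha.fst'.prodMk continuous_snd)) hs

theorem continuous_doubleIntegral (hF : Continuous (uncurry F)) :
    Continuous (uncurry (doubleIntegral F)) :=
  continuous_parametric_intervalIntegral_of_continuous
    (f := fun (p : ℝ × ℝ) u => ∫ v in (0 : ℝ)..p.2, F u v)
    (continuous_integral_comp hF continuous_snd continuous_fst.snd) continuous_fst

theorem doubleIntegral_sub (hF : Continuous (uncurry F)) (hG : Continuous (uncurry G)) :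
    doubleIntegral F x t - doubleIntegral G x t =
      doubleIntegral (fun u v => F u v - G u v) x t := by
  have hF' := continuous_integral_comp hF continuous_id' (continuous_const (y := t))
  have hG' := continuous_integral_comp hG continuous_id' (continuous_const (y := t))
  rw [doubleIntegral, doubleIntegral, ← integral_sub (hF'.intervalIntegrable _ _)
    (hG'.intervalIntegrable _ _)]
  refine integral_congr fun u _ => (integral_sub ?_ ?_).symm
  · exact (hF.comp (continuous_const.prodMk continuous_id)).intervalIntegrable _ _
  · exact (hG.comp (continuous_const.prodMk continuous_id)).intervalIntegrable _ _

theorem doubleIntegral_congr (hx : 0 ≤ x) (ht : 0 ≤ t)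
    (hFG : ∀ u ∈ Icc 0 x, ∀ v ∈ Icc 0 t, F u v = G u v) :
    doubleIntegral F x t = doubleIntegral G x t :=
  integral_congr fun u hu => integral_congr fun v hv =>
    hFG u (uIcc_of_le hx ▸ hu) v (uIcc_of_le ht ▸ hv)

theorem abs_integral_le_of_abs_le_exp {f : ℝ → ℝ} {a K : ℝ} (ha : 0 < a) (ht : 0 ≤ t)
    (hf : ∀ v ∈ Icc 0 t, |f v| ≤ K * exp (a * v)) :
    |∫ v in (0 : ℝ)..t, f v| ≤ K * exp (a * t) / a := by
  have hK : 0 ≤ K := by simpa using (abs_nonneg _).trans (hf 0 ⟨le_rfl, ht⟩)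
  have hexp : ∫ v in (0 : ℝ)..t, exp (a * v) = (exp (a * t) - 1) / a := by
    rw [integral_comp_mul_left (fun v => exp v) ha.ne', integral_exp, mul_zero, exp_zero,
      smul_eq_mul, inv_mul_eq_div]
  calc |∫ v in (0 : ℝ)..t, f v| = ‖∫ v in (0 : ℝ)..t, f v‖ := (norm_eq_abs _).symm
    _ ≤ ∫ v in (0 : ℝ)..t, K * exp (a * v) :=
        norm_integral_le_of_norm_le ht (.of_forall fun v hv => hf v (Ioc_subset_Icc_self hv))
          ((by fun_prop : Continuous fun v => K * exp (a * v)).intervalIntegrable _ _)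
    _ = K * ((exp (a * t) - 1) / a) := by rw [integral_const_mul, hexp]
    _ ≤ K * exp (a * t) / a := by
        rw [← mul_div_assoc]; gcongr; linarith

theorem abs_doubleIntegral_le_of_abs_le_exp {a K : ℝ} (ha : 0 < a) (hx : 0 ≤ x) (ht : 0 ≤ t)
    (hF : ∀ u ∈ Icc 0 x, ∀ v ∈ Icc 0 t, |F u v| ≤ K * exp (a * (u + v))) :
    |doubleIntegral F x t| ≤ K / a ^ 2 * exp (a * (x + t)) := by
  have hinner (u : ℝ) (hu : u ∈ Icc 0 x) :
      |∫ v in (0 : ℝ)..t, F u v| ≤ K * exp (a * t) / a * exp (a * u) := by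
    refine (abs_integral_le_of_abs_le_exp (K := K * exp (a * u)) ha ht fun v hv => ?_).trans_eq
      (by ring)
    rw [mul_assoc, ← exp_add, ← mul_add]
    exact hF u hu v hv
  refine (abs_integral_le_of_abs_le_exp ha hx hinner).trans_eq ?_
  rw [mul_add, exp_add]
  field_simp

theorem abs_exp_neg_mul_doubleIntegral_le {a K : ℝ} (ha : 0 < a) (hx : 0 ≤ x) (ht : 0 ≤ t)
    (hF : ∀ u ∈ Icc 0 x, ∀ v ∈ Icc 0 t, |F u v| ≤ K * exp (a * (u + v))) :
    |exp (-(a * (x + t))) * doubleIntegral F x t| ≤ K / a ^ 2 := by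
  rw [abs_mul, abs_exp]
  calc exp (-(a * (x + t))) * |doubleIntegral F x t|
      ≤ exp (-(a * (x + t))) * (K / a ^ 2 * exp (a * (x + t))) := by
        gcongr; exact abs_doubleIntegral_le_of_abs_le_exp ha hx ht hF
    _ = K / a ^ 2 := by rw [mul_left_comm, ← exp_add, neg_add_cancel, exp_zero, mul_one]

end DoubleIntegral

abbrev Quadrant : Type := Ici (0 : ℝ) × Ici (0 : ℝ)

section Picard

variable (σ : ℝ → ℝ) (h : ℝ → ℝ → ℝ) {M : ℝ}

def IsSolution (Y : ℝ → ℝ → ℝ) : Prop :=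
  ∀ x t, 0 ≤ x → 0 ≤ t → Y x t = h x t + doubleIntegral (fun u v => σ (Y u v)) x t

variable {σ h} in
theorem IsSolution.congr {Y Z : ℝ → ℝ → ℝ} (hY : IsSolution σ h Y)
    (hYZ : ∀ x t, 0 ≤ x → 0 ≤ t → Y x t = Z x t) : IsSolution σ h Z := by
  intro x t hx ht
  rw [← hYZ x t hx ht, hY x t hx ht, doubleIntegral_congr hx ht fun u hu v hv => by
    rw [hYZ u v hu.1 hv.1]]

/-- The solution whose deviation from `h`, damped by the weight `exp (-2 (x + t))`, is `φ`. -/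
noncomputable def ofProfile (φ : Quadrant →ᵇ ℝ) (u v : ℝ) : ℝ :=
  h u v + exp (2 * (u + v)) * φ (projIci 0 u, projIci 0 v)

variable {h}

theorem ofProfile_of_nonneg (φ : Quadrant →ᵇ ℝ) {u v : ℝ} (hu : 0 ≤ u) (hv : 0 ≤ v) :
    ofProfile h φ u v = h u v + exp (2 * (u + v)) * φ (⟨u, hu⟩, ⟨v, hv⟩) := by
  rw [ofProfile, projIci_of_mem hu, projIci_of_mem hv]

theorem continuous_ofProfile (hh : Continuous (uncurry h)) (φ : Quadrant →ᵇ ℝ) :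
    Continuous (uncurry (ofProfile h φ)) :=
  hh.add ((by fun_prop : Continuous fun p : ℝ × ℝ => exp (2 * (p.1 + p.2))).mul
    (φ.continuous.comp ((continuous_projIci.comp continuous_fst).prodMk
      (continuous_projIci.comp continuous_snd))))

theorem abs_ofProfile_sub_le (φ ψ : Quadrant →ᵇ ℝ) {u v : ℝ} (hu : 0 ≤ u) (hv : 0 ≤ v) :
    |ofProfile h φ u v - ofProfile h ψ u v| ≤ dist φ ψ * exp (2 * (u + v)) := by
  rw [ofProfile_of_nonneg φ hu hv, ofProfile_of_nonneg ψ hu hv, add_sub_add_left_eq_sub,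
    ← mul_sub, abs_mul, abs_exp, mul_comm]
  gcongr
  exact φ.dist_coe_le_dist _

variable {σ}

theorem abs_exp_neg_mul_doubleIntegral_comp_le (hM : ∀ y, |σ y| ≤ M) (Y : ℝ → ℝ → ℝ) {x t : ℝ}
    (hx : 0 ≤ x) (ht : 0 ≤ t) :
    |exp (-(2 * (x + t))) * doubleIntegral (fun u v => σ (Y u v)) x t| ≤ M / 4 := by
  have hM0 : 0 ≤ M := (abs_nonneg _).trans (hM 0)
  refine (abs_exp_neg_mul_doubleIntegral_le (K := M) two_pos hx ht fun u hu v hv => ?_).trans_eq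
    (by norm_num)
  exact (hM _).trans (le_mul_of_one_le_right hM0 (one_le_exp (by linarith [hu.1, hv.1])))

noncomputable def picard (hσ : Continuous σ) (hM : ∀ y, |σ y| ≤ M) (hh : Continuous (uncurry h))
    (φ : Quadrant →ᵇ ℝ) : Quadrant →ᵇ ℝ :=
  .ofNormedAddCommGroup
    (fun q => exp (-(2 * (q.1 + q.2))) * doubleIntegral (fun u v => σ (ofProfile h φ u v)) q.1 q.2)
    ((by fun_prop : Continuous fun q : Quadrant => exp (-(2 * (q.1 + q.2)))).mul
      ((continuous_doubleIntegral (F := fun u v => σ (ofProfile h φ u v))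
        (hσ.comp (continuous_ofProfile hh φ))).comp
        (by fun_prop : Continuous fun q : Quadrant => ((q.1 : ℝ), (q.2 : ℝ)))))
    (M / 4) fun q => abs_exp_neg_mul_doubleIntegral_comp_le hM _ q.1.2 q.2.2

theorem picard_apply (hσ : Continuous σ) (hM : ∀ y, |σ y| ≤ M) (hh : Continuous (uncurry h))
    (φ : Quadrant →ᵇ ℝ) (q : Quadrant) :
    picard hσ hM hh φ q =
      exp (-(2 * (q.1 + q.2))) * doubleIntegral (fun u v => σ (ofProfile h φ u v)) q.1 q.2 :=
  rfl

theorem exists_ofProfile_eq_of_isSolution (hM : ∀ y, |σ y| ≤ M) (hh : Continuous (uncurry h))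
    {Z : ℝ → ℝ → ℝ} (hZ : ContinuousOn (uncurry Z) (Ici 0 ×ˢ Ici 0)) (hsol : IsSolution σ h Z) :
    ∃ φ : Quadrant →ᵇ ℝ, ∀ x t, 0 ≤ x → 0 ≤ t → Z x t = ofProfile h φ x t := by
  have hval : Continuous fun q : Quadrant => ((q.1 : ℝ), (q.2 : ℝ)) := by fun_prop
  have hcont : Continuous fun q : Quadrant => Z q.1 q.2 - h q.1 q.2 :=
    (hZ.comp_continuous hval fun q => ⟨q.1.2, q.2.2⟩).sub (hh.comp hval)
  refine ⟨.ofNormedAddCommGroup (fun q => exp (-(2 * (q.1 + q.2))) * (Z q.1 q.2 - h q.1 q.2))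
    ((by fun_prop : Continuous fun q : Quadrant => exp (-(2 * (q.1 + q.2)))).mul hcont) (M / 4)
    fun q => ?_, fun x t hx ht => ?_⟩
  · rw [norm_eq_abs, hsol q.1 q.2 q.1.2 q.2.2, add_sub_cancel_left]
    exact abs_exp_neg_mul_doubleIntegral_comp_le hM Z q.1.2 q.2.2
  · rw [ofProfile_of_nonneg _ hx ht, BoundedContinuousFunction.coe_ofNormedAddCommGroup,
      ← mul_assoc, ← exp_add, add_neg_cancel, exp_zero, one_mul, add_sub_cancel]

variable (hσ : LipschitzWith 1 σ) (hM : ∀ y, |σ y| ≤ M) (hh : Continuous (uncurry h))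
include hσ hM hh

theorem contractingWith_picard : ContractingWith (1 / 4) (picard hσ.continuous hM hh) := by
  refine ⟨by norm_num, .of_dist_le_mul fun φ ψ =>
    (BoundedContinuousFunction.dist_le (by positivity)).2 ?_⟩
  rintro ⟨⟨x, hx⟩, ⟨t, ht⟩⟩
  have hF (φ : Quadrant →ᵇ ℝ) : Continuous (uncurry fun u v => σ (ofProfile h φ u v)) :=
    hσ.continuous.comp (continuous_ofProfile hh φ)
  rw [picard_apply, picard_apply, dist_eq, ← mul_sub, doubleIntegral_sub (hF φ) (hF ψ)]
  refine (abs_exp_neg_mul_doubleIntegral_le two_pos hx ht fun u hu v hv => ?_).trans_eq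
    (by norm_num; ring)
  calc |σ (ofProfile h φ u v) - σ (ofProfile h ψ u v)|
      ≤ |ofProfile h φ u v - ofProfile h ψ u v| := by
        simpa [dist_eq] using hσ.dist_le_mul (ofProfile h φ u v) (ofProfile h ψ u v)
    _ ≤ dist φ ψ * exp (2 * (u + v)) := abs_ofProfile_sub_le φ ψ hu.1 hv.1

theorem isFixedPt_picard_iff (φ : Quadrant →ᵇ ℝ) :
    IsFixedPt (picard hσ.continuous hM hh) φ ↔ IsSolution σ h (ofProfile h φ) := by
  have hpoint (x t : ℝ) (hx : 0 ≤ x) (ht : 0 ≤ t) :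
      picard hσ.continuous hM hh φ (⟨x, hx⟩, ⟨t, ht⟩) = φ (⟨x, hx⟩, ⟨t, ht⟩) ↔
        ofProfile h φ x t = h x t + doubleIntegral (fun u v => σ (ofProfile h φ u v)) x t := by
    rw [picard_apply, ofProfile_of_nonneg _ hx ht, add_right_inj, exp_neg,
      inv_mul_eq_iff_eq_mul₀ (exp_ne_zero _), eq_comm]
  refine ⟨fun hfix x t hx ht => (hpoint x t hx ht).1 (DFunLike.congr_fun hfix _), fun hsol => ?_⟩
  ext ⟨⟨x, hx⟩, ⟨t, ht⟩⟩
  exact (hpoint x t hx ht).2 (hsol x t hx ht)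

theorem existsUnique_isSolution :
    ∃ Y : ℝ → ℝ → ℝ, Continuous (uncurry Y) ∧ IsSolution σ h Y ∧
      ∀ Z : ℝ → ℝ → ℝ, ContinuousOn (uncurry Z) (Ici 0 ×ˢ Ici 0) → IsSolution σ h Z →
        ∀ x t, 0 ≤ x → 0 ≤ t → Z x t = Y x t := by
  have hT := contractingWith_picard hσ hM hh
  refine ⟨ofProfile h (hT.fixedPoint _), continuous_ofProfile hh _,
    (isFixedPt_picard_iff hσ hM hh _).1 hT.fixedPoint_isFixedPt, fun Z hZc hZ => ?_⟩
  obtain ⟨ζ, hζ⟩ := exists_ofProfile_eq_of_isSolution hM hh hZc hZ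
  have hζ_fixed := (isFixedPt_picard_iff hσ hM hh ζ).2 (hZ.congr hζ)
  rwa [hT.fixedPoint_unique hζ_fixed] at hζ

end Picard

end Goursat

theorem sineGordon_goursat_exists_unique_general (f g : ℝ → ℝ) (c : ℝ)
    (hf : ContinuousOn f (Set.Ici 0)) (hg : ContinuousOn g (Set.Ici 0)) :
    ∃ Y : ℝ → ℝ → ℝ,
      (ContinuousOn (fun p : ℝ × ℝ => Y p.1 p.2) (Set.Ici 0 ×ˢ Set.Ici 0) ∧
        ∀ x t : ℝ, 0 ≤ x → 0 ≤ t →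
          Y x t = f x + g t - c
            + ∫ u in (0 : ℝ)..x, ∫ v in (0 : ℝ)..t, Real.sin (Y u v)) ∧
      ∀ Z : ℝ → ℝ → ℝ,
        (ContinuousOn (fun p : ℝ × ℝ => Z p.1 p.2) (Set.Ici 0 ×ˢ Set.Ici 0) ∧
          ∀ x t : ℝ, 0 ≤ x → 0 ≤ t →
            Z x t = f x + g t - c
              + ∫ u in (0 : ℝ)..x, ∫ v in (0 : ℝ)..t, Real.sin (Z u v)) →
        ∀ x t : ℝ, 0 ≤ x → 0 ≤ t → Z x t = Y x t := by
  set h : ℝ → ℝ → ℝ := fun x t => f (max 0 x) + g (max 0 t) - c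
  have hh : Continuous (uncurry h) :=
    ((hf.comp_continuous (by fun_prop) fun p => le_max_left 0 p.1).add
      (hg.comp_continuous (by fun_prop) fun p => le_max_left 0 p.2)).sub continuous_const
  have hdata (x t : ℝ) (hx : 0 ≤ x) (ht : 0 ≤ t) : h x t = f x + g t - c := by
    simp only [h, max_eq_right hx, max_eq_right ht]
  obtain ⟨Y, hYc, hY, huniq⟩ :=
    Goursat.existsUnique_isSolution lipschitzWith_sin abs_sin_le_one hh
  refine ⟨Y, ⟨hYc.continuousOn, fun x t hx ht => ?_⟩, fun Z ⟨hZc, hZ⟩ => huniq Z hZc ?_⟩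
  · rw [hY x t hx ht, hdata x t hx ht]
    rfl
  · intro x t hx ht
    rw [hZ x t hx ht, hdata x t hx ht]
    rfl

/-- Existence and uniqueness (Angelova–Georgiev–Angelov) for the Goursat problem for the
sine-Gordon equation on the quarter-plane, in integral form: there is exactly one
continuous `Y` on `[0,∞) × [0,∞)` with
`Y(x,t) = f(x) + g(t) - c + ∫₀ˣ∫₀ᵗ sin(Y(u,v)) dv du`. -/
theorem sineGordon_goursat_exists_unique (f g : ℝ → ℝ) (c : ℝ)
    (hf : ContinuousOn f (Set.Ici 0)) (hg : ContinuousOn g (Set.Ici 0))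
    (hf0 : f 0 = c) (hg0 : g 0 = c) :
    ∃ Y : ℝ → ℝ → ℝ,
      (ContinuousOn (fun p : ℝ × ℝ => Y p.1 p.2) (Set.Ici 0 ×ˢ Set.Ici 0) ∧
        ∀ x t : ℝ, 0 ≤ x → 0 ≤ t →
          Y x t = f x + g t - c
            + ∫ u in (0 : ℝ)..x, ∫ v in (0 : ℝ)..t, Real.sin (Y u v)) ∧
      ∀ Z : ℝ → ℝ → ℝ,
        (ContinuousOn (fun p : ℝ × ℝ => Z p.1 p.2) (Set.Ici 0 ×ˢ Set.Ici 0) ∧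
          ∀ x t : ℝ, 0 ≤ x → 0 ≤ t →
            Z x t = f x + g t - c
              + ∫ u in (0 : ℝ)..x, ∫ v in (0 : ℝ)..t, Real.sin (Z u v)) →
        ∀ x t : ℝ, 0 ≤ x → 0 ≤ t → Z x t = Y x t :=
  sineGordon_goursat_exists_unique_general f g c hf hg
end

section
/- Let F : ℝ → ℝ be globally Lipschitz, let a, b > 0 and 0 < x₀ ≤ a, 0 < t₀ ≤ b. For k = 1, 2 let fₖ : [0,a] → ℝ and gₖ : [0,b] → ℝ be continuous with fₖ(0) = gₖ(0) = cₖ, and let Yₖ be a continuous function on [0,a] × [0,b] satisfying Yₖ(x,t) = fₖ(x) + gₖ(t) - cₖ + ∫₀ˣ ∫₀ᵗ F(Yₖ(u,v)) dv du for all (x,t) ∈ [0,a] × [0,b]. If f₁(x) = f₂(x) for all x ∈ [0,x₀] and g₁(t) = g₂(t) for all t ∈ [0,t₀], then Y₁(x,t) = Y₂(x,t) for all (x,t) ∈ [0,x₀] × [0,t₀]. -/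
/-!
On `[0,x₀] × [0,t₀]` the data of the two problems coincide, so `w = Y₁ - Y₂` satisfies
`w(x,t) = ∫₀ˣ ∫₀ᵗ (F(Y₁) - F(Y₂))`, whence `|w(x,t)| ≤ K ∫₀ˣ ∫₀ᵗ |w|` for a Lipschitz constant `K`
of `F`. Starting from a uniform bound `M` of the continuous function `w` on the rectangle and
iterating gives `|w(x,t)| ≤ M Kⁿ (x t)ⁿ / (n!)²` for every `n`, which tends to `0`.
-/

open Set Function Filter intervalIntegral MeasureTheory
open scoped Nat

namespace intervalIntegral

theorem integral_mono_on_of_nonneg {f g : ℝ → ℝ} {a b : ℝ} (hab : a ≤ b)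
    (hf : ∀ x ∈ Icc a b, 0 ≤ f x) (hg : IntervalIntegrable g volume a b)
    (hfg : ∀ x ∈ Icc a b, f x ≤ g x) :
    ∫ x in a..b, f x ≤ ∫ x in a..b, g x := by
  rw [integral_of_le hab, integral_of_le hab]
  have hIoc : ∀ {P : ℝ → Prop}, (∀ x ∈ Icc a b, P x) →
      ∀ᵐ x ∂volume.restrict (Ioc a b), P x :=
    fun hP => (ae_restrict_iff' measurableSet_Ioc).mpr
      (ae_of_all _ fun x hx => hP x (Ioc_subset_Icc_self hx))
  exact integral_mono_of_nonneg (hIoc hf) hg.1 (hIoc hfg)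

theorem abs_integral_integral_le {G H : ℝ → ℝ → ℝ} {a x c t : ℝ} (hax : a ≤ x)
    (hct : c ≤ t) (hH : Continuous (uncurry H))
    (hGH : ∀ u ∈ Icc a x, ∀ v ∈ Icc c t, |G u v| ≤ H u v) :
    |∫ u in a..x, ∫ v in c..t, G u v| ≤ ∫ u in a..x, ∫ v in c..t, H u v := by
  refine (abs_integral_le_integral_abs hax).trans <|
    integral_mono_on_of_nonneg hax (fun _ _ => abs_nonneg _)
      ((continuous_parametric_intervalIntegral_of_continuous' hH c t).intervalIntegrable _ _)
      fun u hu => ?_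
  exact (abs_integral_le_integral_abs hct).trans <|
    integral_mono_on_of_nonneg hct (fun _ _ => abs_nonneg _)
      ((hH.uncurry_left u).intervalIntegrable _ _) (hGH u hu)

theorem integral_integral_const_mul_mul_pow (C x t : ℝ) (n : ℕ) :
    ∫ u in (0 : ℝ)..x, ∫ v in (0 : ℝ)..t, C * (u * v) ^ n =
      C * (x * t) ^ (n + 1) / (n + 1) ^ 2 := by
  simp only [mul_pow, integral_const_mul, integral_mul_const, integral_pow]
  field_simp
  ring

end intervalIntegral

section ParametricIntegral

variable {f f₁ f₂ : ℝ → ℝ → ℝ} {a₁ a₂ b₁ b₂ : ℝ}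

theorem ContinuousOn.intervalIntegral_of_Icc_prod
    (hf : ContinuousOn (uncurry f) (Icc a₁ a₂ ×ˢ Icc b₁ b₂)) {s t : ℝ}
    (hs : s ∈ Icc b₁ b₂) (ht : t ∈ Icc b₁ b₂) :
    ContinuousOn (fun u => ∫ v in s..t, f u v) (Icc a₁ a₂) := by
  rcases (Icc a₁ a₂).eq_empty_or_nonempty with hempty | ⟨u₀, hu₀⟩
  · simp [hempty]
  have ha : a₁ ≤ a₂ := hu₀.1.trans hu₀.2
  have hb : b₁ ≤ b₂ := hs.1.trans hs.2
  -- Clamping both variables to the rectangle gives a globally continuous function with the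
  -- same values there.
  set ψ : ℝ → ℝ → ℝ := fun u v => f (projIcc a₁ a₂ ha u) (projIcc b₁ b₂ hb v)
  have hψ : Continuous (uncurry ψ) :=
    hf.comp_continuous ((continuous_subtype_val.comp (continuous_projIcc (h := ha))).prodMap
      (continuous_subtype_val.comp (continuous_projIcc (h := hb))))
      fun p : ℝ × ℝ => ⟨(projIcc a₁ a₂ ha p.1).2, (projIcc b₁ b₂ hb p.2).2⟩
  refine (continuous_parametric_intervalIntegral_of_continuous' hψ s t).continuousOn.congr
    fun u hu => integral_congr fun v hv => ?_
  simp only [ψ, projIcc_of_mem ha hu, projIcc_of_mem hb (uIcc_subset_Icc hs ht hv)]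

theorem integral_integral_sub_of_continuousOn
    (hf₁ : ContinuousOn (uncurry f₁) (Icc a₁ a₂ ×ˢ Icc b₁ b₂))
    (hf₂ : ContinuousOn (uncurry f₂) (Icc a₁ a₂ ×ˢ Icc b₁ b₂)) {x t : ℝ}
    (hx : x ∈ Icc a₁ a₂) (ht : t ∈ Icc b₁ b₂) :
    (∫ u in a₁..x, ∫ v in b₁..t, f₁ u v) - ∫ u in a₁..x, ∫ v in b₁..t, f₂ u v =
      ∫ u in a₁..x, ∫ v in b₁..t, f₁ u v - f₂ u v := by
  have ha₁ : a₁ ∈ Icc a₁ a₂ := ⟨le_rfl, hx.1.trans hx.2⟩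
  have hb₁ : b₁ ∈ Icc b₁ b₂ := ⟨le_rfl, ht.1.trans ht.2⟩
  have houter : ∀ {f : ℝ → ℝ → ℝ}, ContinuousOn (uncurry f) (Icc a₁ a₂ ×ˢ Icc b₁ b₂) →
      IntervalIntegrable (fun u => ∫ v in b₁..t, f u v) volume a₁ x := fun hf =>
    ((hf.intervalIntegral_of_Icc_prod hb₁ ht).mono (uIcc_subset_Icc ha₁ hx)).intervalIntegrable
  have hinner : ∀ {f : ℝ → ℝ → ℝ}, ContinuousOn (uncurry f) (Icc a₁ a₂ ×ˢ Icc b₁ b₂) →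
      ∀ u ∈ Icc a₁ a₂, IntervalIntegrable (f u) volume b₁ t := fun hf u hu =>
    ((hf.uncurry_left u hu).mono (uIcc_subset_Icc hb₁ ht)).intervalIntegrable
  rw [← integral_sub (houter hf₁) (houter hf₂)]
  refine integral_congr fun u hu => ?_
  have hu' := uIcc_subset_Icc ha₁ hx hu
  exact (integral_sub (hinner hf₁ u hu') (hinner hf₂ u hu')).symm

end ParametricIntegral

section Gronwall

variable {w G : ℝ → ℝ → ℝ} {K M x₀ t₀ : ℝ}

theorem abs_le_pow_div_factorial_sq_of_eq_integral_integral (hK : 0 ≤ K)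
    (hM : ∀ x ∈ Icc 0 x₀, ∀ t ∈ Icc 0 t₀, |w x t| ≤ M)
    (hG : ∀ x ∈ Icc 0 x₀, ∀ t ∈ Icc 0 t₀, |G x t| ≤ K * |w x t|)
    (hw : ∀ x ∈ Icc 0 x₀, ∀ t ∈ Icc 0 t₀,
      w x t = ∫ u in (0 : ℝ)..x, ∫ v in (0 : ℝ)..t, G u v)
    (n : ℕ) :
    ∀ x ∈ Icc 0 x₀, ∀ t ∈ Icc 0 t₀, |w x t| ≤ M * K ^ n * (x * t) ^ n / (n ! ^ 2) := by
  induction n with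
  | zero => simpa using hM
  | succ n ih =>
    intro x hx t ht
    have hbound : ∀ u ∈ Icc 0 x, ∀ v ∈ Icc 0 t,
        |G u v| ≤ K * (M * K ^ n / (n ! ^ 2)) * (u * v) ^ n := by
      intro u hu v hv
      have hu₀ : u ∈ Icc 0 x₀ := ⟨hu.1, hu.2.trans hx.2⟩
      have hv₀ : v ∈ Icc 0 t₀ := ⟨hv.1, hv.2.trans ht.2⟩
      calc |G u v| ≤ K * |w u v| := hG u hu₀ v hv₀
        _ ≤ K * (M * K ^ n * (u * v) ^ n / (n ! ^ 2)) :=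
          mul_le_mul_of_nonneg_left (ih u hu₀ v hv₀) hK
        _ = K * (M * K ^ n / (n ! ^ 2)) * (u * v) ^ n := by ring
    calc |w x t|
        ≤ ∫ u in (0 : ℝ)..x, ∫ v in (0 : ℝ)..t, K * (M * K ^ n / (n ! ^ 2)) * (u * v) ^ n := by
          rw [hw x hx t ht]
          exact abs_integral_integral_le hx.1 ht.1 (by fun_prop) hbound
      _ = M * K ^ (n + 1) * (x * t) ^ (n + 1) / ((n + 1)! ^ 2) := by
          rw [integral_integral_const_mul_mul_pow, Nat.factorial_succ]
          push_cast
          field_simp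
          ring

theorem eq_zero_of_eq_integral_integral (hK : 0 ≤ K)
    (hM : ∀ x ∈ Icc 0 x₀, ∀ t ∈ Icc 0 t₀, |w x t| ≤ M)
    (hG : ∀ x ∈ Icc 0 x₀, ∀ t ∈ Icc 0 t₀, |G x t| ≤ K * |w x t|)
    (hw : ∀ x ∈ Icc 0 x₀, ∀ t ∈ Icc 0 t₀,
      w x t = ∫ u in (0 : ℝ)..x, ∫ v in (0 : ℝ)..t, G u v) :
    ∀ x ∈ Icc 0 x₀, ∀ t ∈ Icc 0 t₀, w x t = 0 := by
  intro x hx t ht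
  have hlim : Tendsto (fun n : ℕ => M * K ^ n * (x * t) ^ n / (n ! ^ 2)) atTop (nhds 0) := by
    have h := ((FloorSemiring.tendsto_pow_div_factorial_atTop (K * (x * t))).mul
      (FloorSemiring.tendsto_pow_div_factorial_atTop 1)).const_mul M
    simp only [mul_zero] at h
    refine h.congr fun n => ?_
    simp only [one_pow, mul_pow]
    ring
  exact abs_nonpos_iff.mp <| ge_of_tendsto' hlim fun n =>
    abs_le_pow_div_factorial_sq_of_eq_integral_integral hK hM hG hw n x hx t ht

end Gronwall

theorem goursat_domain_of_dependence_general (F : ℝ → ℝ) (hF : ∃ K : NNReal, LipschitzWith K F)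
    (a b x₀ t₀ : ℝ) (hx₀a : x₀ ≤ a) (ht₀b : t₀ ≤ b)
    (f₁ f₂ g₁ g₂ : ℝ → ℝ) (c₁ c₂ : ℝ)
    (hf₁0 : f₁ 0 = c₁) (hf₂0 : f₂ 0 = c₂)
    (Y₁ Y₂ : ℝ → ℝ → ℝ)
    (hY₁ : ContinuousOn (fun p : ℝ × ℝ => Y₁ p.1 p.2) (Set.Icc 0 a ×ˢ Set.Icc 0 b))
    (hY₂ : ContinuousOn (fun p : ℝ × ℝ => Y₂ p.1 p.2) (Set.Icc 0 a ×ˢ Set.Icc 0 b))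
    (heq₁ : ∀ x ∈ Set.Icc (0 : ℝ) a, ∀ t ∈ Set.Icc (0 : ℝ) b,
      Y₁ x t = f₁ x + g₁ t - c₁ + ∫ u in (0 : ℝ)..x, ∫ v in (0 : ℝ)..t, F (Y₁ u v))
    (heq₂ : ∀ x ∈ Set.Icc (0 : ℝ) a, ∀ t ∈ Set.Icc (0 : ℝ) b,
      Y₂ x t = f₂ x + g₂ t - c₂ + ∫ u in (0 : ℝ)..x, ∫ v in (0 : ℝ)..t, F (Y₂ u v))
    (hfagree : ∀ x ∈ Set.Icc (0 : ℝ) x₀, f₁ x = f₂ x)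
    (hgagree : ∀ t ∈ Set.Icc (0 : ℝ) t₀, g₁ t = g₂ t) :
    ∀ x ∈ Set.Icc (0 : ℝ) x₀, ∀ t ∈ Set.Icc (0 : ℝ) t₀, Y₁ x t = Y₂ x t := by
  obtain ⟨K, hK⟩ := hF
  have hsub : Icc 0 x₀ ×ˢ Icc 0 t₀ ⊆ Icc 0 a ×ˢ Icc 0 b :=
    prod_mono (Icc_subset_Icc_right hx₀a) (Icc_subset_Icc_right ht₀b)
  obtain ⟨M, hM⟩ := (isCompact_Icc.prod isCompact_Icc).exists_bound_of_continuousOn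
    ((hY₁.sub hY₂).mono hsub)
  have hdiff : ∀ x ∈ Icc 0 x₀, ∀ t ∈ Icc 0 t₀, Y₁ x t - Y₂ x t =
      ∫ u in (0 : ℝ)..x, ∫ v in (0 : ℝ)..t, F (Y₁ u v) - F (Y₂ u v) := by
    intro x hx t ht
    have hxa : x ∈ Icc 0 a := Icc_subset_Icc_right hx₀a hx
    have htb : t ∈ Icc 0 b := Icc_subset_Icc_right ht₀b ht
    have hc : c₁ = c₂ := by rw [← hf₁0, ← hf₂0, hfagree 0 ⟨le_rfl, hx.1.trans hx.2⟩]
    rw [heq₁ x hxa t htb, heq₂ x hxa t htb, hfagree x hx, hgagree t ht, hc,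
      ← integral_integral_sub_of_continuousOn (f₁ := fun u v => F (Y₁ u v))
        (f₂ := fun u v => F (Y₂ u v)) (hK.continuous.comp_continuousOn hY₁)
        (hK.continuous.comp_continuousOn hY₂) hxa htb]
    ring
  intro x hx t ht
  refine sub_eq_zero.mp <|
    eq_zero_of_eq_integral_integral (w := fun x t => Y₁ x t - Y₂ x t) (K := K) K.2
    (fun x hx t ht => hM (x, t) ⟨hx, ht⟩) (fun u _ v _ => ?_) hdiff x hx t ht
  simpa only [Real.dist_eq] using hK.dist_le_mul (Y₁ u v) (Y₂ u v)

/-- Domain of dependence for the Goursat integral equation: if two solutions have data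
agreeing on `[0,x₀]` and `[0,t₀]`, then the solutions agree on `[0,x₀] × [0,t₀]`. -/
theorem goursat_domain_of_dependence (F : ℝ → ℝ) (hF : ∃ K : NNReal, LipschitzWith K F)
    (a b x₀ t₀ : ℝ) (ha : 0 < a) (hb : 0 < b)
    (hx₀ : 0 < x₀) (hx₀a : x₀ ≤ a) (ht₀ : 0 < t₀) (ht₀b : t₀ ≤ b)
    (f₁ f₂ g₁ g₂ : ℝ → ℝ) (c₁ c₂ : ℝ)
    (hf₁ : ContinuousOn f₁ (Set.Icc 0 a)) (hg₁ : ContinuousOn g₁ (Set.Icc 0 b))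
    (hf₂ : ContinuousOn f₂ (Set.Icc 0 a)) (hg₂ : ContinuousOn g₂ (Set.Icc 0 b))
    (hf₁0 : f₁ 0 = c₁) (hg₁0 : g₁ 0 = c₁) (hf₂0 : f₂ 0 = c₂) (hg₂0 : g₂ 0 = c₂)
    (Y₁ Y₂ : ℝ → ℝ → ℝ)
    (hY₁ : ContinuousOn (fun p : ℝ × ℝ => Y₁ p.1 p.2) (Set.Icc 0 a ×ˢ Set.Icc 0 b))
    (hY₂ : ContinuousOn (fun p : ℝ × ℝ => Y₂ p.1 p.2) (Set.Icc 0 a ×ˢ Set.Icc 0 b))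
    (heq₁ : ∀ x ∈ Set.Icc (0 : ℝ) a, ∀ t ∈ Set.Icc (0 : ℝ) b,
      Y₁ x t = f₁ x + g₁ t - c₁ + ∫ u in (0 : ℝ)..x, ∫ v in (0 : ℝ)..t, F (Y₁ u v))
    (heq₂ : ∀ x ∈ Set.Icc (0 : ℝ) a, ∀ t ∈ Set.Icc (0 : ℝ) b,
      Y₂ x t = f₂ x + g₂ t - c₂ + ∫ u in (0 : ℝ)..x, ∫ v in (0 : ℝ)..t, F (Y₂ u v))
    (hfagree : ∀ x ∈ Set.Icc (0 : ℝ) x₀, f₁ x = f₂ x)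
    (hgagree : ∀ t ∈ Set.Icc (0 : ℝ) t₀, g₁ t = g₂ t) :
    ∀ x ∈ Set.Icc (0 : ℝ) x₀, ∀ t ∈ Set.Icc (0 : ℝ) t₀, Y₁ x t = Y₂ x t :=
  goursat_domain_of_dependence_general F hF a b x₀ t₀ hx₀a ht₀b f₁ f₂ g₁ g₂ c₁ c₂ hf₁0 hf₂0 Y₁ Y₂
    hY₁ hY₂ heq₁ heq₂ hfagree hgagree
end
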